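/- arXiv:1301.1637 — 4 statements merged into one kernel-verified Lean document; each statement's English description precedes it below -/
import Mathlib

section
/- Let (X, ν) be a probability space, T an ergodic invertible measure-preserving transformation of (X, ν), and J a Markov operator on L²(X, ν). If T̂ ∘ J = J, then J = Θ. -/
open MeasureTheory Filter
open scoped RealInnerProductSpace ENNReal

noncomputable section

variable {X : Type*} [MeasurableSpace X]

/-- The constant function `1` as an element of `L²(X, ν)`. -/
def oneL2 (ν : Measure X) [IsProbabilityMeasure ν] : Lp ℝ 2 ν :=
  Lp.const 2 ν (1 : ℝ)

/-- `J` is a Markov operator on `L²(X, ν)`: it is positivity preserving,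
`J 1 = 1` and `J* 1 = 1`. -/
structure IsMarkov (ν : Measure X) [IsProbabilityMeasure ν]
    (J : Lp ℝ 2 ν →L[ℝ] Lp ℝ 2 ν) : Prop where
  pos : ∀ f : Lp ℝ 2 ν, 0 ≤ f → 0 ≤ J f
  map_one : J (oneL2 ν) = oneL2 ν
  adjoint_map_one : (ContinuousLinearMap.adjoint J) (oneL2 ν) = oneL2 ν

/-- `Θ`, the orthogonal projection of `L²(X, ν)` onto the constants:
`Θ f = (∫ f dν) • 1 = ⟪1, f⟫ • 1`. -/
def Theta (ν : Measure X) [IsProbabilityMeasure ν] : Lp ℝ 2 ν →L[ℝ] Lp ℝ 2 ν :=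
  (innerSL ℝ (oneL2 ν)).smulRight (oneL2 ν)

/-- The Koopman operator `f ↦ f ∘ T` on `L²(X, ν)` of a measure-preserving map `T`. -/
def koopman (ν : Measure X) [IsProbabilityMeasure ν] {T : X → X}
    (hT : MeasurePreserving T ν ν) : Lp ℝ 2 ν →L[ℝ] Lp ℝ 2 ν where
  toFun := Lp.compMeasurePreserving T hT
  map_add' := map_add _
  map_smul' := by
    intro c g
    refine Lp.ext ?_
    have h1 := Lp.coeFn_compMeasurePreserving (μ := ν) (c • g) hT
    have h2 := (Lp.coeFn_smul c g).comp_tendsto hT.quasiMeasurePreserving.tendsto_ae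
    have h3 := Lp.coeFn_smul c (Lp.compMeasurePreserving T hT g)
    have h4 := Lp.coeFn_compMeasurePreserving (μ := ν) g hT
    filter_upwards [h1, h2, h3, h4] with x e1 e2 e3 e4
    simp only [Function.comp_apply, Pi.smul_apply, RingHom.id_apply] at *
    rw [e1, e2, e3, e4]
  cont := (Lp.isometry_compMeasurePreserving hT).continuous

/-- The map `T^i` for `i : ℤ`, where `T` is an invertible (bi-measurable) map. -/
def mpowZ (T : X ≃ᵐ X) : ℤ → X → X
  | Int.ofNat n => (⇑T)^[n]
  | Int.negSucc n => (⇑T.symm)^[n + 1]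

/-- `T` is totally ergodic: all nonzero powers of `T` are ergodic. -/
def TotallyErgodic (ν : Measure X) (T : X ≃ᵐ X) : Prop :=
  ∀ i : ℤ, i ≠ 0 → Ergodic (mpowZ T i) ν

/-- The Koopman operator of the power `T^i`, `i : ℤ`, of an invertible
measure-preserving transformation `T`. -/
def koopmanZ (ν : Measure X) [IsProbabilityMeasure ν] (T : X ≃ᵐ X)
    (hT : MeasurePreserving T ν ν) : ℤ → (Lp ℝ 2 ν →L[ℝ] Lp ℝ 2 ν)
  | Int.ofNat n => (koopman ν hT) ^ n
  | Int.negSucc n => (koopman ν (hT.symm T)) ^ (n + 1)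

/-!
An a.e. `T`-invariant function is a.e. constant by ergodicity, so `T̂ (J f) = J f` forces
`J f = c • 1` with `c = ⟪1, J f⟫ = ⟪J* 1, f⟫ = ⟪1, f⟫`, i.e. `J f = Θ f`.
-/

section

variable {ν : Measure X} [IsProbabilityMeasure ν]

theorem smul_oneL2 (c : ℝ) : c • oneL2 ν = Lp.const 2 ν c := by
  simpa [oneL2] using ((Lp.constₗ 2 ν ℝ).map_smul c (1 : ℝ)).symm

theorem norm_oneL2 : ‖oneL2 ν‖ = 1 := by
  rw [oneL2, Lp.norm_const 2 ν 1 two_ne_zero]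
  simp

theorem Theta_apply (f : Lp ℝ 2 ν) : Theta ν f = ⟪oneL2 ν, f⟫ • oneL2 ν := rfl

theorem Theta_smul_oneL2 (c : ℝ) : Theta ν (c • oneL2 ν) = c • oneL2 ν := by
  rw [Theta_apply, real_inner_smul_right, real_inner_self_eq_norm_sq, norm_oneL2, one_pow,
    mul_one]

theorem Theta_comp_eq_of_adjoint_map_one {J : Lp ℝ 2 ν →L[ℝ] Lp ℝ 2 ν}
    (hJ : ContinuousLinearMap.adjoint J (oneL2 ν) = oneL2 ν) : Theta ν ∘L J = Theta ν := by
  ext1 f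
  rw [ContinuousLinearMap.comp_apply, Theta_apply, Theta_apply,
    ← ContinuousLinearMap.adjoint_inner_left, hJ]

theorem coeFn_koopman {T : X → X} (hT : MeasurePreserving T ν ν) (g : Lp ℝ 2 ν) :
    koopman ν hT g =ᵐ[ν] g ∘ T :=
  Lp.coeFn_compMeasurePreserving g hT

theorem Ergodic.Theta_eq_of_koopman_eq {T : X → X} (hT : Ergodic T ν) {g : Lp ℝ 2 ν}
    (hg : koopman ν hT.toMeasurePreserving g = g) : Theta ν g = g := by
  have hinv : g ∘ T =ᵐ[ν] g := by
    simpa only [hg] using (coeFn_koopman hT.toMeasurePreserving g).symm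
  obtain ⟨c, hc⟩ := hT.ae_eq_const_of_ae_eq_comp_ae (Lp.aestronglyMeasurable g) hinv
  have hg_const : g = c • oneL2 ν := by
    rw [smul_oneL2]
    exact Lp.ext (hc.trans (Lp.coeFn_const (p := 2) (μ := ν) c).symm)
  rw [hg_const, Theta_smul_oneL2]

end

/-- If `T` is an ergodic invertible measure-preserving transformation and `J` is a
Markov operator with `T̂ ∘ J = J`, then `J = Θ`. -/
theorem markov_fixed_left_of_ergodic {X : Type*} [MeasurableSpace X]
    (ν : Measure X) [IsProbabilityMeasure ν]
    (T : X ≃ᵐ X) (hT : Ergodic (⇑T) ν)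
    (J : Lp ℝ 2 ν →L[ℝ] Lp ℝ 2 ν) (hJ : IsMarkov ν J)
    (h : koopman ν hT.toMeasurePreserving ∘L J = J) : J = Theta ν := by
  have hTheta : Theta ν ∘L J = J := by
    ext1 f
    exact hT.Theta_eq_of_koopman_eq (DFunLike.congr_fun h f)
  rw [← hTheta, Theta_comp_eq_of_adjoint_map_one hJ.adjoint_map_one]
end
end

section
/- Let (X, ν) be a probability space, let S and T be invertible measure-preserving transformations of (X, ν) with T totally ergodic, let p, q be positive integers, and let i, j be integers. Let J be a Markov operator on L²(X, ν) with J ≠ Θ such that Ŝ^q ∘ J = J ∘ T̂^p and Ŝ^i ∘ J = J ∘ T̂^j. Then j·q = i·p. -/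
open MeasureTheory Filter
open scoped RealInnerProductSpace ENNReal

noncomputable section

variable {X : Type*} [MeasurableSpace X]

/-! The pairs `(c, d)` with `Ŝ^c ∘ J = J ∘ T̂^d` form a subgroup of `ℤ × ℤ`. It contains `(q, p)`
and `(i, j)`, hence `i • (q, p) - q • (i, j) = (0, k)` with `k = i p - j q`, i.e. `J ∘ T̂^k = J`.
If `k ≠ 0` then `T^k` is ergodic, so the fixed space of `T̂^k` is the constants and, by the von
Neumann mean ergodic theorem, the Birkhoff averages of `T̂^k` converge strongly to `Θ`. As `J`
is constant along these averages, `J = J ∘ Θ`, and `J ∘ Θ = Θ` because `J 1 = 1`. -/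

section Koopman

variable {ν : Measure X} [IsProbabilityMeasure ν]

theorem koopman_comp {R₁ R₂ : X → X} (h₁ : MeasurePreserving R₁ ν ν)
    (h₂ : MeasurePreserving R₂ ν ν) :
    koopman ν h₁ ∘L koopman ν h₂ = koopman ν (h₂.comp h₁) := by
  ext1 f
  exact (Lp.compMeasurePreserving_comp_apply f h₂ h₁).symm

theorem koopman_pow {R : X → X} (hR : MeasurePreserving R ν ν) (n : ℕ) :
    koopman ν hR ^ n = koopman ν (hR.iterate n) := by
  ext1 f
  rw [FunLike.coe_pow_eq_iterate]
  exact congrFun (Lp.compMeasurePreserving_iterate hR n) f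

theorem norm_koopman_le_one {R : X → X} (hR : MeasurePreserving R ν ν) :
    ‖koopman ν hR‖ ≤ 1 :=
  ContinuousLinearMap.opNorm_le_bound _ zero_le_one fun f =>
    (Lp.norm_compMeasurePreserving f hR).trans_le (one_mul _).ge

theorem koopman_oneL2 {R : X → X} (hR : MeasurePreserving R ν ν) :
    koopman ν hR (oneL2 ν) = oneL2 ν :=
  rfl

end Koopman

section Powers

variable (T : X ≃ᵐ X)

theorem mpowZ_eq_zpow (n : ℤ) : mpowZ T n = ⇑(T.toEquiv ^ n) := by
  cases n with
  | ofNat n => exact (Equiv.Perm.iterate_eq_pow T.toEquiv n).trans (by rw [← zpow_natCast]; rfl)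
  | negSucc n =>
    rw [zpow_negSucc, ← inv_pow]
    exact Equiv.Perm.iterate_eq_pow T.toEquiv⁻¹ (n + 1)

theorem mpowZ_add (a b : ℤ) : mpowZ T (a + b) = mpowZ T a ∘ mpowZ T b := by
  simp only [mpowZ_eq_zpow, zpow_add, Equiv.Perm.coe_mul]

theorem measurePreserving_mpowZ {ν : Measure X} (hT : MeasurePreserving T ν ν) :
    ∀ n : ℤ, MeasurePreserving (mpowZ T n) ν ν
  | Int.ofNat n => hT.iterate n
  | Int.negSucc n => (hT.symm T).iterate (n + 1)

variable {ν : Measure X} [IsProbabilityMeasure ν] (hT : MeasurePreserving T ν ν)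

theorem koopmanZ_eq_koopman (n : ℤ) :
    koopmanZ ν T hT n = koopman ν (measurePreserving_mpowZ T hT n) := by
  cases n with
  | ofNat n => exact koopman_pow hT n
  | negSucc n => exact koopman_pow (hT.symm T) (n + 1)

theorem koopmanZ_zero : koopmanZ ν T hT 0 = 1 :=
  pow_zero _

theorem koopmanZ_add (a b : ℤ) :
    koopmanZ ν T hT (a + b) = koopmanZ ν T hT a * koopmanZ ν T hT b := by
  simp only [koopmanZ_eq_koopman, ContinuousLinearMap.mul_def, koopman_comp]
  congr 1
  rw [add_comm, mpowZ_add]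

end Powers

section Intertwining

variable {ν : Measure X} [IsProbabilityMeasure ν] {S T : X ≃ᵐ X}

def intertwiningExponents (hS : MeasurePreserving S ν ν) (hT : MeasurePreserving T ν ν)
    (J : Lp ℝ 2 ν →L[ℝ] Lp ℝ 2 ν) : AddSubgroup (ℤ × ℤ) where
  carrier := {e | koopmanZ ν S hS e.1 * J = J * koopmanZ ν T hT e.2}
  zero_mem' := by
    simp only [Set.mem_ofPred_eq, Prod.fst_zero, Prod.snd_zero, koopmanZ_zero, one_mul, mul_one]
  add_mem' := by
    rintro ⟨a, b⟩ ⟨c, d⟩ hab hcd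
    simp only [Set.mem_ofPred_eq, Prod.mk_add_mk] at *
    rw [koopmanZ_add, koopmanZ_add, mul_assoc, hcd, ← mul_assoc, hab, mul_assoc]
  neg_mem' := by
    rintro ⟨c, d⟩ hcd
    simp only [Set.mem_ofPred_eq, Prod.fst_neg, Prod.snd_neg] at *
    calc koopmanZ ν S hS (-c) * J
        = koopmanZ ν S hS (-c) * (J * koopmanZ ν T hT d) * koopmanZ ν T hT (-d) := by
          rw [mul_assoc, mul_assoc J, ← koopmanZ_add, add_neg_cancel, koopmanZ_zero, mul_one]
      _ = J * koopmanZ ν T hT (-d) := by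
          rw [← hcd, ← mul_assoc, ← koopmanZ_add, neg_add_cancel, koopmanZ_zero, one_mul]

theorem mem_intertwiningExponents {hS : MeasurePreserving S ν ν} {hT : MeasurePreserving T ν ν}
    {J : Lp ℝ 2 ν →L[ℝ] Lp ℝ 2 ν} {e : ℤ × ℤ} :
    e ∈ intertwiningExponents hS hT J ↔ koopmanZ ν S hS e.1 * J = J * koopmanZ ν T hT e.2 :=
  Iff.rfl

end Intertwining

theorem ContinuousLinearMap.comp_starProjection_eqLocus_of_comp_eq {𝕜 E F : Type*} [RCLike 𝕜]
    [NormedAddCommGroup E] [InnerProductSpace 𝕜 E] [CompleteSpace E]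
    [AddCommGroup F] [Module 𝕜 F] [TopologicalSpace F] [T2Space F]
    {U : E →L[𝕜] E} (hU : ‖U‖ ≤ 1) {J : E →L[𝕜] F} (hJ : J ∘L U = J) :
    J ∘L (U.eqLocus (1 : E →L[𝕜] E)).starProjection = J := by
  ext x
  have hlim := (J.continuous.tendsto _).comp (U.tendsto_birkhoffAverage_orthogonalProjection hU x)
  have hconst : ∀ᶠ N in atTop, (J ∘ fun N => birkhoffAverage 𝕜 U _root_.id N x) N = J x := by
    filter_upwards [eventually_ne_atTop 0] with N hN
    have hJU : (⇑J ∘ _root_.id) ∘ ⇑U = ⇑J ∘ _root_.id := congrArg DFunLike.coe hJ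
    rw [Function.comp_apply, map_birkhoffAverage 𝕜 𝕜 J,
      birkhoffAverage_of_comp_eq 𝕜 hJU (Nat.cast_ne_zero.2 hN)]
    rfl
  exact tendsto_nhds_unique (hlim.congr' hconst) tendsto_const_nhds

section Ergodic

variable {ν : Measure X} [IsProbabilityMeasure ν]

theorem Theta_eq_starProjection : Theta ν = (ℝ ∙ oneL2 ν).starProjection := by
  ext1 f
  rw [Submodule.starProjection_singleton, norm_oneL2]
  simp [Theta]

theorem eqLocus_koopman_eq_span_oneL2 {R : X → X} (hR : MeasurePreserving R ν ν)
    (hRe : Ergodic R ν) : (koopman ν hR).eqLocus (1 : Lp ℝ 2 ν →L[ℝ] Lp ℝ 2 ν) = ℝ ∙ oneL2 ν := by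
  refine le_antisymm (fun f hf => ?_) ?_
  · have hfR : ⇑f ∘ R =ᵐ[ν] f := by
      have hRf := Lp.coeFn_compMeasurePreserving f hR
      rwa [show Lp.compMeasurePreserving R hR f = f from hf, eventuallyEq_comm] at hRf
    obtain ⟨c, hc⟩ := hRe.ae_eq_const_of_ae_eq_comp_ae (Lp.aestronglyMeasurable f) hfR
    refine Submodule.mem_span_singleton.2 ⟨c, Lp.ext ?_⟩
    filter_upwards [hc, Lp.coeFn_smul c (oneL2 ν), Lp.coeFn_const 2 ν (1 : ℝ)] with x h₁ h₂ h₃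
    rw [h₁, h₂, Pi.smul_apply, oneL2, h₃]
    simp
  · rw [Submodule.span_le, Set.singleton_subset_iff]
    exact koopman_oneL2 hR

theorem eq_Theta_of_comp_koopman_eq {R : X → X} (hR : MeasurePreserving R ν ν)
    (hRe : Ergodic R ν) {J : Lp ℝ 2 ν →L[ℝ] Lp ℝ 2 ν} (hJ₁ : J (oneL2 ν) = oneL2 ν)
    (hJ : J ∘L koopman ν hR = J) : J = Theta ν := by
  have hJP :=
    ContinuousLinearMap.comp_starProjection_eqLocus_of_comp_eq (norm_koopman_le_one hR) hJ
  simp only [eqLocus_koopman_eq_span_oneL2 hR hRe, ← Theta_eq_starProjection] at hJP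
  rw [← hJP]
  ext1 f
  simp [Theta, hJ₁]

end Ergodic

theorem exponents_proportional_general {X : Type*} [MeasurableSpace X]
    (ν : Measure X) [IsProbabilityMeasure ν]
    (S T : X ≃ᵐ X) (hS : MeasurePreserving (⇑S) ν ν) (hT : MeasurePreserving (⇑T) ν ν)
    (hTte : TotallyErgodic ν T)
    (p q : ℕ) (i j : ℤ)
    (J : Lp ℝ 2 ν →L[ℝ] Lp ℝ 2 ν) (hJM : IsMarkov ν J) (hJne : J ≠ Theta ν)
    (h1 : ((koopman ν hS) ^ q) ∘L J = J ∘L ((koopman ν hT) ^ p))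
    (h2 : koopmanZ ν S hS i ∘L J = J ∘L koopmanZ ν T hT j) :
    j * (q : ℤ) = i * (p : ℤ) := by
  by_contra hne
  have hqp : ((q : ℤ), (p : ℤ)) ∈ intertwiningExponents hS hT J := h1
  have hij : (i, j) ∈ intertwiningExponents hS hT J := h2
  have hk : (0, i * p - j * q) ∈ intertwiningExponents hS hT J := by
    convert sub_mem (zsmul_mem hqp i) (zsmul_mem hij q) using 1
    ext <;> simp only [Prod.fst_sub, Prod.snd_sub, Prod.smul_fst, Prod.smul_snd, smul_eq_mul]
      <;> ring
  have hk₀ : i * (p : ℤ) - j * q ≠ 0 := sub_ne_zero.2 (Ne.symm hne)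
  refine hJne <| eq_Theta_of_comp_koopman_eq (measurePreserving_mpowZ T hT _) (hTte _ hk₀)
    hJM.map_one ?_
  rw [mem_intertwiningExponents, koopmanZ_zero, one_mul] at hk
  rw [← koopmanZ_eq_koopman T hT]
  exact hk.symm

/-- If `T` is totally ergodic, `J ≠ Θ` is a Markov operator with `Ŝ^q ∘ J = J ∘ T̂^p`
and `Ŝ^i ∘ J = J ∘ T̂^j`, then `j q = i p`. -/
theorem exponents_proportional {X : Type*} [MeasurableSpace X]
    (ν : Measure X) [IsProbabilityMeasure ν]
    (S T : X ≃ᵐ X) (hS : MeasurePreserving (⇑S) ν ν) (hT : MeasurePreserving (⇑T) ν ν)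
    (hTte : TotallyErgodic ν T)
    (p q : ℕ) (hp : 0 < p) (hq : 0 < q) (i j : ℤ)
    (J : Lp ℝ 2 ν →L[ℝ] Lp ℝ 2 ν) (hJM : IsMarkov ν J) (hJne : J ≠ Theta ν)
    (h1 : ((koopman ν hS) ^ q) ∘L J = J ∘L ((koopman ν hT) ^ p))
    (h2 : koopmanZ ν S hS i ∘L J = J ∘L koopmanZ ν T hT j) :
    j * (q : ℤ) = i * (p : ℤ) :=
  exponents_proportional_general ν S T hS hT hTte p q i j J hJM hJne h1 h2
end
end

section
/- Let d ≥ 2 be a prime number, let C ≥ 0, and let c : ℕ → ℝ satisfy |c(i)| ≤ C for all i and c(i) = 0 whenever d does not divide i. Suppose that for every integer n ≥ 1, Σ_{i=1}^{N} c(d·n·i)·μ(i) = o(N) as N → ∞, where μ is the Möbius function. Then Σ_{i=1}^{N} c(i)·μ(i) = o(N) as N → ∞. -/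
open Filter Asymptotics Finset ArithmeticFunction
open scoped ArithmeticFunction.Moebius

/-! Since `d` is prime, `μ (d j)` is `-μ j` when `d ∤ j` and `0` otherwise. So a Möbius sum of a
sequence supported on the multiples of `d` equals minus the same kind of sum over `j ≤ N / d`
restricted to `d ∤ j`; and a restricted sum is the full sum plus, by the same identity, a restricted
sum over `j ≤ N / d`. Iterating `K` times writes `Σ_{i ≤ N} c i μ i` as `K` of the hypothesised
sums, each `o(N)`, plus a restricted sum of length `N / d ^ (K + 1)`, hence at most
`C N / d ^ (K + 1)`. -/

theorem Finset.sum_Icc_filter_dvd {M : Type*} [AddCommMonoid M] {d : ℕ} (hd : 0 < d) (N : ℕ)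
    (g : ℕ → M) : ∑ i ∈ Icc 1 N with d ∣ i, g i = ∑ j ∈ Icc 1 (N / d), g (d * j) := by
  have himage : {i ∈ Icc 1 N | d ∣ i} = (Icc 1 (N / d)).image (d * ·) := by
    ext i
    simp only [mem_filter, mem_Icc, mem_image]
    constructor
    · rintro ⟨⟨hi1, hiN⟩, j, rfl⟩
      exact ⟨j, ⟨Nat.pos_of_mul_pos_left hi1, (Nat.le_div_iff_mul_le hd).2 (by linarith)⟩, rfl⟩
    · rintro ⟨j, ⟨hj1, hjN⟩, rfl⟩
      exact ⟨⟨Nat.mul_pos hd hj1, mul_comm d j ▸ Nat.mul_le_of_le_div d j N hjN⟩, dvd_mul_right d j⟩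
  rw [himage, sum_image fun _ _ _ _ h => Nat.eq_of_mul_eq_mul_left hd h]

theorem ArithmeticFunction.moebius_prime_mul {p : ℕ} (hp : p.Prime) (n : ℕ) :
    μ (p * n) = if p ∣ n then 0 else -μ n := by
  split_ifs with hpn
  · refine moebius_eq_zero_of_not_squarefree fun hsq => hp.not_isUnit (hsq p ?_)
    exact mul_dvd_mul_left p hpn
  · rw [isMultiplicative_moebius.map_mul_of_coprime ((hp.coprime_iff_not_dvd).2 hpn),
      moebius_apply_prime hp, neg_one_mul]

def moebiusSum (a : ℕ → ℝ) (N : ℕ) : ℝ :=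
  ∑ i ∈ Icc 1 N, a i * μ i

def moebiusSumNotDvd (d : ℕ) (a : ℕ → ℝ) (N : ℕ) : ℝ :=
  ∑ i ∈ Icc 1 N with ¬ d ∣ i, a i * μ i

section Prime

variable {d : ℕ} (hd : d.Prime) (a : ℕ → ℝ) (N : ℕ)
include hd

theorem sum_Icc_filter_dvd_mul_moebius :
    ∑ i ∈ Icc 1 N with d ∣ i, a i * μ i = -moebiusSumNotDvd d (fun j => a (d * j)) (N / d) := by
  rw [sum_Icc_filter_dvd hd.pos, moebiusSumNotDvd, sum_filter, ← sum_neg_distrib]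
  refine sum_congr rfl fun j _ => ?_
  rw [moebius_prime_mul hd]
  split_ifs <;> push_cast <;> ring

theorem moebiusSum_eq_neg_moebiusSumNotDvd (ha : ∀ i, ¬ d ∣ i → a i = 0) :
    moebiusSum a N = -moebiusSumNotDvd d (fun j => a (d * j)) (N / d) := by
  rw [← sum_Icc_filter_dvd_mul_moebius hd, moebiusSum, sum_filter_of_ne]
  intro i _ hi
  by_contra hdi
  simp [ha i hdi] at hi

theorem moebiusSumNotDvd_eq_moebiusSum_add :
    moebiusSumNotDvd d a N = moebiusSum a N + moebiusSumNotDvd d (fun j => a (d * j)) (N / d) := by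
  rw [moebiusSum, ← sum_filter_add_sum_filter_not _ (d ∣ ·), sum_Icc_filter_dvd_mul_moebius hd,
    moebiusSumNotDvd]
  ring

theorem moebiusSumNotDvd_eq_sum_range_add (K : ℕ) :
    moebiusSumNotDvd d a N = ∑ k ∈ range K, moebiusSum (fun i => a (d ^ k * i)) (N / d ^ k) +
      moebiusSumNotDvd d (fun i => a (d ^ K * i)) (N / d ^ K) := by
  induction K with
  | zero => simp
  | succ K ih =>
    rw [ih, moebiusSumNotDvd_eq_moebiusSum_add hd, sum_range_succ, Nat.div_div_eq_div_mul,
      ← pow_succ]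
    simp only [← mul_assoc, ← pow_succ]
    ring

end Prime

theorem abs_moebiusSumNotDvd_le {d : ℕ} {a : ℕ → ℝ} {C : ℝ} (ha : ∀ i, |a i| ≤ C) (N : ℕ) :
    |moebiusSumNotDvd d a N| ≤ C * N := by
  have hterm : ∀ i, |a i * μ i| ≤ C := fun i => by
    rw [abs_mul]
    have : |(μ i : ℝ)| ≤ 1 := by exact_mod_cast abs_moebius_le_one
    nlinarith [abs_nonneg (a i), abs_nonneg (μ i : ℝ), ha i]
  have hC : 0 ≤ C := (abs_nonneg _).trans (ha 0)
  calc |moebiusSumNotDvd d a N| ≤ ∑ i ∈ Icc 1 N with ¬ d ∣ i, |a i * μ i| :=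
        abs_sum_le_sum_abs _ _
    _ ≤ #{i ∈ Icc 1 N | ¬ d ∣ i} • C := sum_le_card_nsmul _ _ _ fun i _ => hterm i
    _ ≤ #(Icc 1 N) • C := by gcongr; exact filter_subset _ _
    _ = C * N := by simp [mul_comm]

theorem Asymptotics.IsLittleO.comp_nat_div {E : Type*} [SeminormedAddCommGroup E] {f : ℕ → E}
    (hf : f =o[atTop] (fun N => (N : ℝ))) {m : ℕ} (hm : m ≠ 0) :
    (fun N => f (N / m)) =o[atTop] (fun N => (N : ℝ)) :=
  (hf.comp_tendsto (Nat.tendsto_div_const_atTop hm)).trans_isBigO <|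
    isBigO_of_le _ fun N => by simpa using Nat.div_le_self N m

theorem Asymptotics.isLittleO_of_forall_exists_isLittleO {α E F : Type*} [SeminormedAddCommGroup E]
    [SeminormedAddCommGroup F] {l : Filter α} {u : α → E} {g : α → F}
    (h : ∀ ε > 0, ∃ v : α → E, v =o[l] g ∧ ∀ᶠ x in l, ‖u x - v x‖ ≤ ε * ‖g x‖) : u =o[l] g := by
  refine isLittleO_iff.2 fun ε hε => ?_
  obtain ⟨v, hv, huv⟩ := h (ε / 2) (half_pos hε)
  filter_upwards [huv, isLittleO_iff.1 hv (half_pos hε)] with x hx hvx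
  calc ‖u x‖ ≤ ‖u x - v x‖ + ‖v x‖ := norm_le_norm_sub_add _ _
    _ ≤ ε * ‖g x‖ := by linarith

theorem mul_natCast_div_le {C ε : ℝ} (hε : 0 ≤ ε) {m : ℕ} (hm : C ≤ ε * m) (N : ℕ) :
    C * (N / m : ℕ) ≤ ε * N :=
  calc C * (N / m : ℕ) ≤ ε * m * (N / m : ℕ) := by gcongr
    _ ≤ ε * N := by
      rw [mul_assoc, mul_comm (m : ℝ)]
      gcongr
      exact_mod_cast Nat.div_mul_le_self N m

theorem moebius_reduction_general (d : ℕ) (hd : d.Prime) (C : ℝ)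
    (c : ℕ → ℝ) (hbound : ∀ i, |c i| ≤ C) (hvanish : ∀ i, ¬ d ∣ i → c i = 0)
    (h : ∀ n : ℕ, 1 ≤ n →
      (fun N : ℕ => ∑ i ∈ Finset.Icc 1 N, c (d * n * i) * (ArithmeticFunction.moebius i : ℝ))
        =o[atTop] (fun N : ℕ => (N : ℝ))) :
    (fun N : ℕ => ∑ i ∈ Finset.Icc 1 N, c i * (ArithmeticFunction.moebius i : ℝ))
      =o[atTop] (fun N : ℕ => (N : ℝ)) := by
  have hd0 : d ≠ 0 := hd.ne_zero
  have htelescope : ∀ K N, moebiusSum c N =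
      -(∑ k ∈ range K, moebiusSum (fun i => c (d * d ^ k * i)) (N / d / d ^ k) +
        moebiusSumNotDvd d (fun i => c (d * d ^ K * i)) (N / d / d ^ K)) := fun K N => by
    rw [moebiusSum_eq_neg_moebiusSumNotDvd hd c N hvanish,
      moebiusSumNotDvd_eq_sum_range_add hd _ _ K]
    simp only [mul_assoc]
  refine isLittleO_of_forall_exists_isLittleO fun ε hε => ?_
  obtain ⟨K, hK⟩ := pow_unbounded_of_one_lt (C / ε) (Nat.one_lt_cast.2 hd.one_lt : (1 : ℝ) < d)
  refine ⟨fun N => -∑ k ∈ range K, moebiusSum (fun i => c (d * d ^ k * i)) (N / d / d ^ k),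
    ?_, Eventually.of_forall fun N => ?_⟩
  · refine (IsLittleO.fun_sum fun k _ => ?_).neg_left
    exact ((h (d ^ k) (Nat.one_le_pow _ _ hd.pos)).comp_nat_div (pow_ne_zero k hd0)).comp_nat_div
      hd0
  · have hCε : C ≤ ε * (d ^ K : ℕ) := by
      rw [div_lt_iff₀ hε, mul_comm] at hK
      exact_mod_cast hK.le
    show ‖moebiusSum c N - -∑ k ∈ range K, _‖ ≤ ε * ‖(N : ℝ)‖
    rw [htelescope K N, Real.norm_eq_abs, Real.norm_natCast, neg_add, add_sub_cancel_left, abs_neg]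
    calc _ ≤ C * (N / d / d ^ K : ℕ) := abs_moebiusSumNotDvd_le (fun i => hbound _) _
      _ ≤ ε * (N / d : ℕ) := mod_cast mul_natCast_div_le hε.le hCε (N / d)
      _ ≤ ε * N := by gcongr; exact_mod_cast Nat.div_le_self N d

/-- For a prime `d` and a bounded sequence `c` vanishing off the multiples of `d`,
if `Σ_{i ≤ N} c (d n i) μ i = o(N)` for every `n ≥ 1`, then
`Σ_{i ≤ N} c i μ i = o(N)`. -/
theorem moebius_reduction (d : ℕ) (hd : d.Prime) (C : ℝ) (hC : 0 ≤ C)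
    (c : ℕ → ℝ) (hbound : ∀ i, |c i| ≤ C) (hvanish : ∀ i, ¬ d ∣ i → c i = 0)
    (h : ∀ n : ℕ, 1 ≤ n →
      (fun N : ℕ => ∑ i ∈ Finset.Icc 1 N, c (d * n * i) * (ArithmeticFunction.moebius i : ℝ))
        =o[atTop] (fun N : ℕ => (N : ℝ))) :
    (fun N : ℕ => ∑ i ∈ Finset.Icc 1 N, c i * (ArithmeticFunction.moebius i : ℝ))
      =o[atTop] (fun N : ℕ => (N : ℝ)) :=
  moebius_reduction_general d hd C c hbound hvanish h
end

section
/- Let (X, ν) be a standard probability space, let U and V be Koopman operators of invertible measure-preserving transformations of (X, ν), and suppose there exists a Markov operator J on L²(X, ν) with J ≠ Θ and U ∘ J = J ∘ V. Then there exists a Markov operator J' on L²(X, ν) with J' ≠ Θ, U ∘ J' = J' ∘ V, such that J' is indecomposable among Markov operators K satisfying U ∘ K = K ∘ V. -/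
open MeasureTheory Filter
open scoped RealInnerProductSpace ENNReal

noncomputable section

variable {X : Type*} [MeasurableSpace X]

/-- `J` is indecomposable among Markov operators `K` satisfying the intertwining
relation `U ∘ K = K ∘ V`: it is not a nontrivial convex combination of two distinct
such Markov intertwiners. -/
def Indecomposable (ν : Measure X) [IsProbabilityMeasure ν]
    (U V J : Lp ℝ 2 ν →L[ℝ] Lp ℝ 2 ν) : Prop :=
  ¬ ∃ (t : ℝ) (K₁ K₂ : Lp ℝ 2 ν →L[ℝ] Lp ℝ 2 ν),
      0 < t ∧ t < 1 ∧ K₁ ≠ K₂ ∧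
      IsMarkov ν K₁ ∧ IsMarkov ν K₂ ∧
      U ∘L K₁ = K₁ ∘L V ∧ U ∘L K₂ = K₂ ∘L V ∧
      J = t • K₁ + (1 - t) • K₂


/-!
Matrix coefficients `(f, g) ↦ ⟪K f, g⟫` embed the operators on a Hilbert space into the locally
convex space `H → H → ℝ`; on the unit ball this is the weak operator topology, and by the Riesz
representation theorem the image of the ball is a closed subset of a product of intervals, hence
compact. A Markov operator is an `L²` contraction: positivity gives the Kadison–Schwarz inequality
`(K f)² ≤ K (f²)`, and `K* 1 = 1` says `K` preserves integrals. The Markov intertwiners are cut out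
of the unit ball by closed convex conditions on the coefficients, so they form a compact convex
set. It contains `J ≠ Θ`, so by Krein–Milman it has an extreme point other than `Θ`, and an extreme
point is indecomposable.
-/

open ContinuousLinearMap Metric

section MatrixCoefficients

variable {E : Type*} [NormedAddCommGroup E] [InnerProductSpace ℝ E]

def matrixCoeff : (E →L[ℝ] E) →ₗ[ℝ] E → E → ℝ where
  toFun K f g := ⟪K f, g⟫
  map_add' K L := by ext f g; simp [inner_add_left]
  map_smul' c K := by ext f g; simp [real_inner_smul_left]

@[simp]
lemma matrixCoeff_apply (K : E →L[ℝ] E) (f g : E) : matrixCoeff K f g = ⟪K f, g⟫ := rfl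

lemma matrixCoeff_injective : Function.Injective (matrixCoeff : (E →L[ℝ] E) →ₗ[ℝ] E → E → ℝ) :=
  fun _ _ h => ext fun f => ext_inner_right ℝ fun g => congrFun (congrFun h f) g

variable (E) in
def contractiveForms : Set (E → E → ℝ) :=
  {B | (∀ f, B f ∈ Set.range ((⇑) : (E →ₗ[ℝ] ℝ) → E → ℝ)) ∧
    (∀ g, (B · g) ∈ Set.range ((⇑) : (E →ₗ[ℝ] ℝ) → E → ℝ)) ∧
    ∀ f g, |B f g| ≤ ‖f‖ * ‖g‖}

lemma isCompact_contractiveForms : IsCompact (contractiveForms E) := by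
  have hbox : IsCompact (Set.univ.pi fun f : E => Set.univ.pi fun g : E =>
      Set.Icc (-(‖f‖ * ‖g‖)) (‖f‖ * ‖g‖)) :=
    isCompact_univ_pi fun _ => isCompact_univ_pi fun _ => isCompact_Icc
  have hclosed : IsClosed (contractiveForms E) := by
    simp only [contractiveForms, Set.ofPred_and, Set.ofPred_forall]
    refine .inter (isClosed_iInter fun f => ?_) (.inter (isClosed_iInter fun g => ?_)
      (isClosed_iInter fun f => isClosed_iInter fun g => isClosed_le (by fun_prop) (by fun_prop)))
    · exact (LinearMap.isClosed_range_coe _ _ _).preimage (continuous_apply f)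
    · exact (LinearMap.isClosed_range_coe _ _ _).preimage (by fun_prop)
  refine hbox.of_isClosed_subset hclosed fun B hB => ?_
  simp only [Set.mem_univ_pi]
  exact fun f g => abs_le.mp (hB.2.2 f g)

lemma image_matrixCoeff_closedBall [CompleteSpace E] :
    matrixCoeff '' closedBall (0 : E →L[ℝ] E) 1 = contractiveForms E := by
  ext B
  constructor
  · rintro ⟨K, hK, rfl⟩
    refine ⟨fun f => ⟨innerₛₗ ℝ (K f), rfl⟩, fun g => ⟨(innerₛₗ ℝ g).comp (K : E →ₗ[ℝ] E), ?_⟩,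
      fun f g => ?_⟩
    · ext f; simp [real_inner_comm]
    · calc |⟪K f, g⟫| ≤ ‖K f‖ * ‖g‖ := abs_real_inner_le_norm _ _
        _ ≤ ‖f‖ * ‖g‖ := by
          gcongr
          simpa using K.le_of_opNorm_le (mem_closedBall_zero_iff.mp hK) f
  · rintro ⟨hleft, hright, hbound⟩
    choose ℓ hℓ using hleft
    choose r hr using hright
    let b : E →L⋆[ℝ] E →L[ℝ] ℝ := LinearMap.mkContinuous₂
      (LinearMap.mk₂'ₛₗ (starRingEnd ℝ) (RingHom.id ℝ) B
        (fun f f' g => by simpa [hr] using (r g).map_add f f')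
        (fun c f g => by simpa only [hr, smul_eq_mul, conj_trivial] using (r g).map_smul c f)
        (fun f g g' => by simpa [hℓ] using (ℓ f).map_add g g')
        (fun c f g => by simpa only [hℓ, smul_eq_mul, RingHom.id_apply] using (ℓ f).map_smul c g))
      1 (fun f g => by simpa using hbound f g)
    refine ⟨InnerProductSpace.continuousLinearMapOfBilin b, mem_closedBall_zero_iff.mpr ?_,
      by ext f g; simp [b]⟩
    refine opNorm_le_bound _ zero_le_one fun f => ?_
    set v := InnerProductSpace.continuousLinearMapOfBilin b f
    have h : ‖v‖ ^ 2 ≤ ‖f‖ * ‖v‖ := by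
      rw [← real_inner_self_eq_norm_sq, InnerProductSpace.continuousLinearMapOfBilin_apply]
      simpa [b] using (le_abs_self _).trans (hbound f v)
    nlinarith [norm_nonneg v, norm_nonneg f]

end MatrixCoefficients

section L2

variable {X : Type*} [MeasurableSpace X] {ν : Measure X}

lemma L2.norm_sq_eq_integral (f : Lp ℝ 2 ν) : ‖f‖ ^ 2 = ∫ x, f x ^ 2 ∂ν := by
  rw [← real_inner_self_eq_norm_sq, L2.inner_def]
  simp [sq]

lemma L2.inner_nonneg {f g : Lp ℝ 2 ν} (hf : 0 ≤ f) (hg : 0 ≤ g) : 0 ≤ ⟪f, g⟫ := by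
  rw [L2.inner_def]
  refine integral_nonneg_of_ae ?_
  filter_upwards [(Lp.coeFn_nonneg f).2 hf, (Lp.coeFn_nonneg g).2 hg] with x hfx hgx
    using mul_nonneg hgx hfx

lemma L2.nonneg_of_forall_inner_nonneg [IsFiniteMeasure ν] {f : Lp ℝ 2 ν}
    (h : ∀ g : Lp ℝ 2 ν, 0 ≤ g → 0 ≤ ⟪f, g⟫) : 0 ≤ f := by
  rw [← Lp.coeFn_nonneg]
  refine ae_nonneg_of_forall_setIntegral_nonneg ((Lp.memLp f).integrable one_le_two)
    fun s hs hνs => ?_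
  rw [← L2.inner_indicatorConstLp_one hs hνs.ne, real_inner_comm]
  refine h _ ((Lp.coeFn_nonneg _).1 ?_)
  filter_upwards [indicatorConstLp_coeFn (p := 2) (hs := hs) (hμs := hνs.ne) (c := (1 : ℝ))]
    with x hx
  rw [hx]
  exact Set.indicator_nonneg (fun _ _ => zero_le_one) x

variable [IsProbabilityMeasure ν]

lemma coeFn_oneL2 : ⇑(oneL2 ν) =ᵐ[ν] fun _ => (1 : ℝ) := Lp.coeFn_const _ _ _

lemma inner_oneL2_left (f : Lp ℝ 2 ν) : ⟪oneL2 ν, f⟫ = ∫ x, f x ∂ν := by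
  rw [oneL2, ← indicatorConstLp_univ, L2.inner_indicatorConstLp_one, Measure.restrict_univ]

end L2

namespace IsMarkov

variable {X : Type*} [MeasurableSpace X] {ν : Measure X} [IsProbabilityMeasure ν]
  {K : Lp ℝ 2 ν →L[ℝ] Lp ℝ 2 ν}

lemma integral_apply (hK : IsMarkov ν K) (f : Lp ℝ 2 ν) : ∫ x, K f x ∂ν = ∫ x, f x ∂ν := by
  rw [← inner_oneL2_left, ← inner_oneL2_left, ← adjoint_inner_left, hK.adjoint_map_one]

lemma sq_apply_le (hK : IsMarkov ν K) {f F : Lp ℝ 2 ν} (hF : F =ᵐ[ν] fun x => f x ^ 2) :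
    ∀ᵐ x ∂ν, K f x ^ 2 ≤ K F x := by
  have hcoe : ∀ (a : ℝ) (g G : Lp ℝ 2 ν),
      ⇑(G - (2 * a) • g + a ^ 2 • oneL2 ν) =ᵐ[ν] fun x => G x - 2 * a * g x + a ^ 2 := by
    intro a g G
    filter_upwards [Lp.coeFn_add (G - (2 * a) • g) (a ^ 2 • oneL2 ν),
      Lp.coeFn_sub G ((2 * a) • g), Lp.coeFn_smul (2 * a) g, Lp.coeFn_smul (a ^ 2) (oneL2 ν),
      coeFn_oneL2] with x h₁ h₂ h₃ h₄ h₅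
    simp only [h₁, Pi.add_apply, h₂, Pi.sub_apply, h₃, h₄, Pi.smul_apply, smul_eq_mul, h₅,
      mul_one]
  -- `K` preserves the pointwise inequality `2 a f - a² ≤ f²`
  have hline : ∀ a : ℝ, ∀ᵐ x ∂ν, 2 * a * K f x - a ^ 2 ≤ K F x := by
    intro a
    have hpos : 0 ≤ F - (2 * a) • f + a ^ 2 • oneL2 ν := by
      rw [← Lp.coeFn_nonneg]
      filter_upwards [hcoe a f F, hF] with x hx hFx
      simp only [hx, hFx, Pi.zero_apply]
      nlinarith [sq_nonneg (f x - a)]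
    have hKpos := (Lp.coeFn_nonneg _).2 (hK.pos _ hpos)
    rw [map_add, map_sub, map_smul, map_smul, hK.map_one] at hKpos
    filter_upwards [hKpos, hcoe a (K f) (K F)] with x hx hcx
    simp only [hcx, Pi.zero_apply] at hx
    linarith
  filter_upwards [ae_all_iff.2 fun q : ℚ => hline q] with x hx
  have hall : ∀ a : ℝ, 2 * a * K f x - a ^ 2 ≤ K F x := fun a =>
    Rat.denseRange_cast.induction_on a (isClosed_le (by fun_prop) continuous_const) hx
  nlinarith [hall (K f x)]

lemma norm_apply_le_of_sq (hK : IsMarkov ν K) {f F : Lp ℝ 2 ν} (hF : F =ᵐ[ν] fun x => f x ^ 2) :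
    ‖K f‖ ≤ ‖f‖ := by
  refine pow_le_pow_iff_left₀ (norm_nonneg _) (norm_nonneg _) two_ne_zero |>.mp ?_
  calc ‖K f‖ ^ 2 = ∫ x, K f x ^ 2 ∂ν := L2.norm_sq_eq_integral _
    _ ≤ ∫ x, K F x ∂ν :=
      integral_mono_ae (Lp.memLp (K f)).integrable_sq ((Lp.memLp _).integrable one_le_two)
        (hK.sq_apply_le hF)
    _ = ∫ x, F x ∂ν := hK.integral_apply F
    _ = ‖f‖ ^ 2 := (integral_congr_ae hF).trans (L2.norm_sq_eq_integral f).symm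

lemma norm_apply_le (hK : IsMarkov ν K) (f : Lp ℝ 2 ν) : ‖K f‖ ≤ ‖f‖ := by
  refine (Lp.simpleFunc.denseRange (p := 2) ENNReal.ofNat_ne_top).induction_on f
    (isClosed_le (by fun_prop) continuous_norm) fun s => ?_
  let φ := Lp.simpleFunc.toSimpleFunc s
  refine hK.norm_apply_le_of_sq
    (F := ((φ.map (· ^ 2)).memLp_of_isFiniteMeasure 2 ν).toLp) ?_
  filter_upwards [MemLp.coeFn_toLp ((φ.map (· ^ 2)).memLp_of_isFiniteMeasure 2 ν),
    Lp.simpleFunc.toSimpleFunc_eq_toFun s] with x h₁ h₂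
  rw [h₁, SimpleFunc.map_apply, h₂]

lemma norm_le_one (hK : IsMarkov ν K) : ‖K‖ ≤ 1 :=
  opNorm_le_bound _ zero_le_one fun f => by simpa using hK.norm_apply_le f

end IsMarkov

lemma exists_mem_extremePoints_ne {E : Type*} [AddCommGroup E] [Module ℝ E]
    [TopologicalSpace E] [T2Space E] [IsTopologicalAddGroup E] [ContinuousSMul ℝ E]
    [LocallyConvexSpace ℝ E] {s : Set E} (hs : IsCompact s) (hconv : Convex ℝ s) {x y : E}
    (hx : x ∈ s) (hxy : x ≠ y) : ∃ z ∈ s.extremePoints ℝ, z ≠ y := by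
  by_contra! h
  have hsub : s ⊆ {y} := by
    rw [← closure_convexHull_extremePoints hs hconv]
    exact closure_minimal (convexHull_min h (convex_singleton y)) isClosed_singleton
  exact hxy (hsub hx)

lemma mem_extremePoints_of_image {𝕜 E F : Type*} [Semiring 𝕜] [PartialOrder 𝕜]
    [AddCommMonoid E] [Module 𝕜 E] [AddCommMonoid F] [Module 𝕜 F] {f : E →ₗ[𝕜] F}
    (hf : Function.Injective f) {s : Set E} {x : E} (hx : f x ∈ (f '' s).extremePoints 𝕜) :
    x ∈ s.extremePoints 𝕜 := by
  refine ⟨hf.mem_set_image.mp hx.1, fun x₁ h₁ x₂ h₂ hseg => ?_⟩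
  obtain ⟨a, b, ha, hb, hab, rfl⟩ := hseg
  exact hf (hx.2 (Set.mem_image_of_mem f h₁) (Set.mem_image_of_mem f h₂)
    ⟨a, b, ha, hb, hab, by simp⟩)

section Intertwiners

variable {X : Type*} [MeasurableSpace X] (ν : Measure X) [IsProbabilityMeasure ν]
  (U V : Lp ℝ 2 ν →L[ℝ] Lp ℝ 2 ν)

def markovIntertwiners : Set (Lp ℝ 2 ν →L[ℝ] Lp ℝ 2 ν) :=
  {K | IsMarkov ν K ∧ U ∘L K = K ∘L V}

def markovIntertwiningForms : Set (Lp ℝ 2 ν → Lp ℝ 2 ν → ℝ) :=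
  {B | (∀ f g, 0 ≤ f → 0 ≤ g → 0 ≤ B f g) ∧ (∀ g, B (oneL2 ν) g = ⟪oneL2 ν, g⟫) ∧
    (∀ f, B f (oneL2 ν) = ⟪f, oneL2 ν⟫) ∧ ∀ f g, B (V f) g = B f (adjoint U g)}

variable {ν U V}

lemma isClosed_markovIntertwiningForms : IsClosed (markovIntertwiningForms ν U V) := by
  simp only [markovIntertwiningForms, Set.ofPred_and, Set.ofPred_forall]
  refine .inter ?_ (.inter ?_ (.inter ?_ ?_)) <;>
    repeat first
      | exact isClosed_le continuous_const (by fun_prop)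
      | exact isClosed_eq (by fun_prop) (by fun_prop)
      | refine isClosed_iInter fun _ => ?_

lemma markovIntertwiners_eq :
    markovIntertwiners ν U V = closedBall 0 1 ∩ matrixCoeff ⁻¹' markovIntertwiningForms ν U V := by
  ext K
  constructor
  · rintro ⟨hK, hKUV⟩
    refine ⟨mem_closedBall_zero_iff.mpr hK.norm_le_one, fun f g hf hg => ?_, fun g => ?_,
      fun f => ?_, fun f g => ?_⟩
    · exact L2.inner_nonneg (hK.pos f hf) hg
    · simp [hK.map_one]
    · rw [matrixCoeff_apply, ← adjoint_inner_right, hK.adjoint_map_one]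
    · rw [matrixCoeff_apply, matrixCoeff_apply, adjoint_inner_right, ← comp_apply, ← hKUV,
        comp_apply]
  · rintro ⟨-, hpos, hone, hadj, hint⟩
    refine ⟨⟨fun f hf => L2.nonneg_of_forall_inner_nonneg fun g hg => hpos f g hf hg,
      ext_inner_right ℝ hone, ext_inner_right ℝ fun f => ?_⟩,
      ext fun f => ext_inner_right ℝ fun g => ?_⟩
    · rw [adjoint_inner_left, real_inner_comm (K f), real_inner_comm f]
      exact hadj f
    · rw [comp_apply, comp_apply, ← adjoint_inner_right]
      exact (hint f g).symm

lemma isCompact_image_markovIntertwiners :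
    IsCompact (matrixCoeff '' markovIntertwiners ν U V) := by
  rw [markovIntertwiners_eq, Set.image_inter_preimage, image_matrixCoeff_closedBall]
  exact isCompact_contractiveForms.inter_right isClosed_markovIntertwiningForms

lemma convex_markovIntertwiners : Convex ℝ (markovIntertwiners ν U V) := by
  rintro K₁ ⟨hK₁, hUV₁⟩ K₂ ⟨hK₂, hUV₂⟩ a b ha hb hab
  refine ⟨⟨fun f hf => ?_, ?_, ?_⟩, ?_⟩
  · refine L2.nonneg_of_forall_inner_nonneg fun g hg => ?_
    simpa [inner_add_left, real_inner_smul_left] using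
      add_nonneg (mul_nonneg ha (L2.inner_nonneg (hK₁.pos f hf) hg))
        (mul_nonneg hb (L2.inner_nonneg (hK₂.pos f hf) hg))
  · simp [hK₁.map_one, hK₂.map_one, ← add_smul, hab]
  · simp [hK₁.adjoint_map_one, hK₂.adjoint_map_one, ← add_smul, hab]
  · simp [comp_add, add_comp, hUV₁, hUV₂]

lemma indecomposable_of_mem_extremePoints {J : Lp ℝ 2 ν →L[ℝ] Lp ℝ 2 ν}
    (hJ : J ∈ (markovIntertwiners ν U V).extremePoints ℝ) : Indecomposable ν U V J := by
  rintro ⟨t, K₁, K₂, ht₀, ht₁, hne, hK₁, hK₂, hUV₁, hUV₂, rfl⟩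
  obtain ⟨h₁, h₂⟩ := (mem_extremePoints.1 hJ).2 _ ⟨hK₁, hUV₁⟩ _ ⟨hK₂, hUV₂⟩
    ⟨t, 1 - t, ht₀, by linarith, by ring, rfl⟩
  exact hne (h₁.trans h₂.symm)

theorem exists_indecomposable_markovIntertwiner_ne_theta {J : Lp ℝ 2 ν →L[ℝ] Lp ℝ 2 ν}
    (hJ : J ∈ markovIntertwiners ν U V) (hJne : J ≠ Theta ν) :
    ∃ J' ∈ markovIntertwiners ν U V, J' ≠ Theta ν ∧ Indecomposable ν U V J' := by
  obtain ⟨B, hB, hBne⟩ := exists_mem_extremePoints_ne isCompact_image_markovIntertwiners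
    (convex_markovIntertwiners.linear_image matrixCoeff) (Set.mem_image_of_mem _ hJ)
    (matrixCoeff_injective.ne hJne)
  obtain ⟨J', -, rfl⟩ := hB.1
  have hJ' := mem_extremePoints_of_image matrixCoeff_injective hB
  exact ⟨J', hJ'.1, ne_of_apply_ne _ hBne, indecomposable_of_mem_extremePoints hJ'⟩

end Intertwiners

theorem exists_indecomposable_intertwiner_general {X : Type*} [MeasurableSpace X]
    (ν : Measure X) [IsProbabilityMeasure ν]
    (S T : X ≃ᵐ X) (hS : MeasurePreserving (⇑S) ν ν) (hT : MeasurePreserving (⇑T) ν ν)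
    (J : Lp ℝ 2 ν →L[ℝ] Lp ℝ 2 ν) (hJ : IsMarkov ν J) (hJne : J ≠ Theta ν)
    (hint : koopman ν hS ∘L J = J ∘L koopman ν hT) :
    ∃ J' : Lp ℝ 2 ν →L[ℝ] Lp ℝ 2 ν, IsMarkov ν J' ∧ J' ≠ Theta ν ∧
      koopman ν hS ∘L J' = J' ∘L koopman ν hT ∧
      Indecomposable ν (koopman ν hS) (koopman ν hT) J' := by
  obtain ⟨J', ⟨hJ', hint'⟩, hne, hind⟩ :=
    exists_indecomposable_markovIntertwiner_ne_theta ⟨hJ, hint⟩ hJne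
  exact ⟨J', hJ', hne, hint', hind⟩

/-- On a standard probability space, if some Markov operator `J ≠ Θ` intertwines the
Koopman operators `U` and `V` of two invertible measure-preserving transformations,
then there is an indecomposable Markov intertwiner `J' ≠ Θ`. -/
theorem exists_indecomposable_intertwiner {X : Type*} [MeasurableSpace X]
    [StandardBorelSpace X] (ν : Measure X) [IsProbabilityMeasure ν]
    (S T : X ≃ᵐ X) (hS : MeasurePreserving (⇑S) ν ν) (hT : MeasurePreserving (⇑T) ν ν)
    (J : Lp ℝ 2 ν →L[ℝ] Lp ℝ 2 ν) (hJ : IsMarkov ν J) (hJne : J ≠ Theta ν)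
    (hint : koopman ν hS ∘L J = J ∘L koopman ν hT) :
    ∃ J' : Lp ℝ 2 ν →L[ℝ] Lp ℝ 2 ν, IsMarkov ν J' ∧ J' ≠ Theta ν ∧
      koopman ν hS ∘L J' = J' ∘L koopman ν hT ∧
      Indecomposable ν (koopman ν hS) (koopman ν hT) J' :=
  exists_indecomposable_intertwiner_general ν S T hS hT J hJ hJne hint
end
end
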